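/- For all integers m ≥ 1 and n ≥ 1 there exist a schema R, a conjunctive query q over R with |body(q)| = n, and a linear set Σ of TGDs over R such that every UCQ-rewriting Q of q w.r.t. Σ contains at least m^n conjunctive queries. Concretely, take R = {p_0,…,p_m} with each p_i unary (plus a 0-ary head predicate p), q : p ← p_0(A_1),…,p_0(A_n) with A_1,…,A_n pairwise distinct variables, and Σ = {p_i(X) → p_0(X) : 1 ≤ i ≤ m}; then every UCQ-rewriting of q w.r.t. Σ must contain, for each tuple (i_1,…,i_n) ∈ {1,…,m}^n, a CQ whose body is {p_{i_1}(A_1),…,p_{i_n}(A_n)}, hence has size at least m^n. -/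

import Mathlib

namespace OntDB

/-- Terms: constants, labeled nulls, and variables (each indexed by naturals). -/
inductive Term : Type
  | const : ℕ → Term
  | null  : ℕ → Term
  | var   : ℕ → Term
deriving DecidableEq

/-- a term is not a labeled null -/
def Term.noNull : Term → Prop
  | .null _ => False
  | _ => True

/-- Atoms: a predicate symbol applied to a list of argument terms. -/
structure Atom : Type where
  pred : ℕ
  args : List Term
deriving DecidableEq

/-- A relational schema: a finite set of predicate symbols, each with an arity. -/
structure Schema : Type where
  preds : Finset ℕ
  ar : ℕ → ℕ

/-- arity(R) : the maximum arity over the predicates of R -/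
def Schema.maxArity (R : Schema) : ℕ := R.preds.sup R.ar

def Atom.overSchema (R : Schema) (a : Atom) : Prop :=
  a.pred ∈ R.preds ∧ a.args.length = R.ar a.pred

/-- applying a substitution to an atom -/
def Atom.subst (h : Term → Term) (a : Atom) : Atom := ⟨a.pred, a.args.map h⟩

/-- a substitution fixes every constant -/
def constFix (h : Term → Term) : Prop := ∀ c, h (Term.const c) = Term.const c

/-- A homomorphism from the set of atoms `A` to the set of atoms `A'`. -/
def IsHom (h : Term → Term) (A A' : Set Atom) : Prop :=
  constFix h ∧ ∀ a ∈ A, a.subst h ∈ A'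

/-- the variables occurring in an atom -/
def Atom.vars (a : Atom) : Finset ℕ :=
  (a.args.filterMap (fun t => match t with | .var v => some v | _ => none)).toFinset

/-- the number of occurrences of the variable `v` in the atom `a` -/
def Atom.countVar (a : Atom) (v : ℕ) : ℕ := a.args.count (Term.var v)

/-- the variables occurring in a finite set of atoms -/
def varsOfSet (S : Finset Atom) : Finset ℕ := S.sup Atom.vars

/-- A conjunctive query: a head atom together with a finite set of body atoms. -/
structure CQ : Type where
  head : Atom
  body : Finset Atom
deriving DecidableEq

/-- the variables occurring in a CQ (head and body) -/
def CQ.vars (q : CQ) : Finset ℕ := q.head.vars ∪ varsOfSet q.body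

/-- the number of occurrences of the variable `v` in the CQ `q` (head and body) -/
def CQ.countVar (q : CQ) (v : ℕ) : ℕ := q.head.countVar v + ∑ a ∈ q.body, a.countVar v

/-- a variable is shared in `q` if it occurs more than once in `q` -/
def CQ.shared (q : CQ) (v : ℕ) : Prop := 2 ≤ q.countVar v

/-- a CQ over a schema: body atoms over the schema, and no labeled nulls occur -/
def CQ.overSchema (R : Schema) (q : CQ) : Prop :=
  (∀ a ∈ q.body, a.overSchema R ∧ ∀ t ∈ a.args, t.noNull) ∧ ∀ t ∈ q.head.args, t.noNull

/-- a tuple of constants -/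
def isConstTuple (t : List Term) : Prop := ∀ s ∈ t, ∃ c, s = Term.const c

/-- Evaluation of a CQ over an instance: the tuples of constants obtained as images
of the distinguished terms under homomorphisms of the body into the instance. -/
def CQ.eval (q : CQ) (I : Set Atom) : Set (List Term) :=
  { t | isConstTuple t ∧ ∃ h : Term → Term, IsHom h ↑q.body I ∧ q.head.args.map h = t }

/-- evaluation of a (possibly infinite) union of CQs -/
def ucqEval (Q : Set CQ) (I : Set Atom) : Set (List Term) := ⋃ q ∈ Q, q.eval I

/-- A TGD (in normal form representation): a finite set of body atoms plus a single
head atom; the existentially quantified variables are exactly the head variables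
that do not occur in the body. -/
structure TGD : Type where
  body : Finset Atom
  head : Atom
deriving DecidableEq

/-- the universally quantified variables occurring in the head -/
def TGD.frontier (σ : TGD) : Finset ℕ := varsOfSet σ.body ∩ σ.head.vars

/-- the existentially quantified variables -/
def TGD.exVars (σ : TGD) : Finset ℕ := σ.head.vars \ varsOfSet σ.body

def TGD.vars (σ : TGD) : Finset ℕ := varsOfSet σ.body ∪ σ.head.vars

/-- normal form: at most one existentially quantified variable, occurring once -/
def TGD.NormalForm (σ : TGD) : Prop :=
  σ.exVars.card ≤ 1 ∧ ∀ v ∈ σ.exVars, σ.head.countVar v = 1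

/-- a TGD is linear if its body consists of a single atom -/
def TGD.Linear (σ : TGD) : Prop := σ.body.card = 1

/-- a set of TGDs is linear if all its members are -/
def LinearSet (Sig : Finset TGD) : Prop := ∀ σ ∈ Sig, σ.Linear

def TGD.overSchema (R : Schema) (σ : TGD) : Prop :=
  σ.body.Nonempty ∧ (∀ a ∈ σ.body, a.overSchema R ∧ ∀ t ∈ a.args, t.noNull) ∧
  σ.head.overSchema R ∧ ∀ t ∈ σ.head.args, t.noNull

/-- satisfaction of a TGD by an instance -/
def TGD.sat (σ : TGD) (I : Set Atom) : Prop :=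
  ∀ h : Term → Term, IsHom h ↑σ.body I →
    ∃ h' : Term → Term, constFix h' ∧
      (∀ v ∈ σ.frontier, h' (Term.var v) = h (Term.var v)) ∧ σ.head.subst h' ∈ I

/-- satisfaction of a set of TGDs -/
def satSet (Sig : Finset TGD) (I : Set Atom) : Prop := ∀ σ ∈ Sig, σ.sat I

/-- a database for a schema: a finite set of atoms over the schema whose
arguments are constants -/
def IsDatabase (R : Schema) (D : Finset Atom) : Prop :=
  ∀ a ∈ D, a.overSchema R ∧ ∀ t ∈ a.args, ∃ c, t = Term.const c

/-- the certain answers of a CQ w.r.t. a database and a set of TGDs -/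
def certAns (q : CQ) (D : Finset Atom) (Sig : Finset TGD) : Set (List Term) :=
  { t | ∀ I : Set Atom, ↑D ⊆ I → satSet Sig I → t ∈ q.eval I }

/-- the certain answers of a (possibly infinite) union of CQs -/
def certAnsUCQ (Q : Set CQ) (D : Finset Atom) (Sig : Finset TGD) : Set (List Term) :=
  { t | ∀ I : Set Atom, ↑D ⊆ I → satSet Sig I → t ∈ ucqEval Q I }

/-- a unifier for a finite set of atoms -/
def IsUnifier (γ : Term → Term) (S : Finset Atom) : Prop :=
  constFix γ ∧ ∀ a ∈ S, ∀ b ∈ S, a.subst γ = b.subst γ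

def Unifies (S : Finset Atom) : Prop := ∃ γ, IsUnifier γ S

/-- most general unifier -/
def IsMGU (γ : Term → Term) (S : Finset Atom) : Prop :=
  IsUnifier γ S ∧ ∀ γ', IsUnifier γ' S → ∃ δ : Term → Term, ∀ t, γ' t = δ (γ t)

/-- `i` is the position of the existentially quantified variable in head(σ) -/
def TGD.exPos (σ : TGD) (i : ℕ) : Prop :=
  ∃ z ∈ σ.exVars, σ.head.args[i]? = some (Term.var z)

/-- applicability of the TGD σ to the set S ⊆ body(q) -/
def Applicable (q : CQ) (σ : TGD) (S : Finset Atom) : Prop :=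
  S.Nonempty ∧ S ⊆ q.body ∧ Unifies (S ∪ {σ.head}) ∧
  ∀ a ∈ S, ∀ i, σ.exPos i →
    (∀ c, a.args[i]? ≠ some (Term.const c)) ∧
    ∀ v, a.args[i]? = some (Term.var v) → ¬ q.shared v

/-- factorizability of the set S ⊆ body(q) w.r.t. the TGD σ -/
def Factorizable (q : CQ) (σ : TGD) (S : Finset Atom) : Prop :=
  S ⊆ q.body ∧ 2 ≤ S.card ∧ Unifies S ∧ (∃ i, σ.exPos i) ∧
  ∃ V : ℕ, V ∉ varsOfSet (q.body \ S) ∧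
    ∀ a ∈ S, (∃ i, σ.exPos i ∧ a.args[i]? = some (Term.var V)) ∧
      ∀ j, a.args[j]? = some (Term.var V) → σ.exPos j

/-- renaming of variables -/
def renT (ρ : ℕ → ℕ) : Term → Term
  | .var v => .var (ρ v)
  | t => t

/-- renaming the variables of a TGD -/
def TGD.rename (σ : TGD) (ρ : ℕ → ℕ) : TGD :=
  ⟨σ.body.image (Atom.subst (renT ρ)), σ.head.subst (renT ρ)⟩

/-- applying a substitution to a CQ -/
def CQ.subst (q : CQ) (γ : Term → Term) : CQ :=
  ⟨q.head.subst γ, q.body.image (Atom.subst γ)⟩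

/-- the restriction on MGUs used by XRewrite under sticky sets of TGDs:
every variable of the protected set `W` (the variables of the input query) is
mapped to a variable of `W` (or to a constant).  For `W = ∅` no restriction. -/
def ProtectsVars (W : Finset ℕ) (γ : Term → Term) : Prop :=
  ∀ v ∈ W, (∃ u ∈ W, γ (Term.var v) = Term.var u) ∨ ∃ c, γ (Term.var v) = Term.const c

/-- the substitution is the identity on all variables outside `V` -/
def IdOutside (V : Finset ℕ) (γ : Term → Term) : Prop :=
  ∀ v, v ∉ V → γ (Term.var v) = Term.var v

/-- one rewriting step of XRewrite (applied to `q`, producing `q'`) -/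
def IsRewriteStep (Sig : Finset TGD) (W : Finset ℕ) (q q' : CQ) : Prop :=
  ∃ σ ∈ Sig, ∃ ρ : ℕ → ℕ, Function.Injective ρ ∧ (∀ v, ρ v ∉ q.vars) ∧
    ∃ S : Finset Atom, Applicable q (σ.rename ρ) S ∧
      ∃ γ : Term → Term, IsMGU γ (S ∪ {(σ.rename ρ).head}) ∧
        IdOutside (varsOfSet (S ∪ {(σ.rename ρ).head})) γ ∧ ProtectsVars W γ ∧
        q' = (CQ.mk q.head ((q.body \ S) ∪ (σ.rename ρ).body)).subst γ

/-- one factorization step of XRewrite -/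
def IsFactStep (Sig : Finset TGD) (W : Finset ℕ) (q q' : CQ) : Prop :=
  ∃ σ ∈ Sig, ∃ S : Finset Atom, Factorizable q σ S ∧
    ∃ γ : Term → Term, IsMGU γ S ∧ IdOutside (varsOfSet S) γ ∧ ProtectsVars W γ ∧
      q' = q.subst γ

/-- the CQs obtainable from q by a finite sequence of rewriting and
factorization steps -/
inductive Reach (Sig : Finset TGD) (W : Finset ℕ) (q : CQ) : CQ → Prop
  | refl : Reach Sig W q q
  | rw {p p' : CQ} : Reach Sig W q p → IsRewriteStep Sig W p p' → Reach Sig W q p'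
  | fact {p p' : CQ} : Reach Sig W q p → IsFactStep Sig W p p' → Reach Sig W q p'

/-- the output of XRewrite(q,Σ): q together with all CQs obtainable from q by a
finite sequence of rewriting and factorization steps whose last step is a
rewriting step -/
def XRewriteOut (Sig : Finset TGD) (W : Finset ℕ) (q : CQ) : Set CQ :=
  {q} ∪ { p' | ∃ p : CQ, Reach Sig W q p ∧ IsRewriteStep Sig W p p' }

/-- two CQs are the same up to bijective variable renaming -/
def CQEquiv (p p' : CQ) : Prop :=
  ∃ ρ : ℕ → ℕ, Function.Bijective ρ ∧ p.subst (renT ρ) = p'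

/-- the SMarking procedure: `Marked Sig σ v` says that the body variable `v` of
σ gets marked -/
inductive Marked (Sig : Finset TGD) : TGD → ℕ → Prop
  | init {σ : TGD} {v : ℕ} : σ ∈ Sig → v ∈ varsOfSet σ.body → v ∉ σ.head.vars →
      Marked Sig σ v
  | prop {σ σ' : TGD} {v : ℕ} (b : Atom) (u : ℕ → ℕ) : σ ∈ Sig → σ' ∈ Sig →
      v ∈ varsOfSet σ.body → v ∈ σ.head.vars → b ∈ σ'.body →
      (∀ i : ℕ, σ.head.args[i]? = some (Term.var v) →
        b.args[i]? = some (Term.var (u i))) →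
      (∀ i : ℕ, σ.head.args[i]? = some (Term.var v) → Marked Sig σ' (u i)) →
      Marked Sig σ v

/-- a set of TGDs is sticky if every marked variable occurs only once in the
body of its TGD -/
def Sticky (Sig : Finset TGD) : Prop :=
  ∀ σ ∈ Sig, ∀ v : ℕ, Marked Sig σ v → (∑ a ∈ σ.body, a.countVar v) = 1

/- ## Propagation graph and atom coverage -/

/-- a position of a schema: a predicate together with an argument index -/
abbrev Pos := ℕ × ℕ

/-- the edges of the propagation graph -/
def PGEdge (σ : TGD) (pb ph : Pos) : Prop :=
  ∃ b ∈ σ.body, ∃ v : ℕ,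
    b.pred = pb.1 ∧ b.args[pb.2]? = some (Term.var v) ∧
    σ.head.pred = ph.1 ∧ σ.head.args[ph.2]? = some (Term.var v)

/-- `vs` is a path in the propagation graph of Σ with edge labels `ls` -/
def IsPath (Sig : Finset TGD) (vs : List Pos) (ls : List TGD) : Prop :=
  vs.length = ls.length + 1 ∧
  ∀ j < ls.length, ∃ σ pb ph,
    ls[j]? = some σ ∧ vs[j]? = some pb ∧ vs[j + 1]? = some ph ∧ σ ∈ Sig ∧ PGEdge σ pb ph

/-- a minimal path: no cycle is traversed twice consecutively -/
def MinimalPath (Sig : Finset TGD) (vs : List Pos) (ls : List TGD) : Prop :=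
  IsPath Sig vs ls ∧
  ¬ ∃ i j : ℕ, 0 < i ∧ i + 1 < vs.length ∧ 0 < j ∧ j ≤ i ∧ i + j < vs.length ∧
      (∀ k ≤ j, vs[i - j + k]? = vs[i + k]?) ∧ ∀ k < j, ls[i - j + k]? = ls[i + k]?

/-- a tight sequence of (linear) TGDs -/
def TightSeq (σs : List TGD) : Prop :=
  ∀ j, j + 1 < σs.length →
    ∃ σ1 σ2, σs[j]? = some σ1 ∧ σs[j + 1]? = some σ2 ∧
      ∃ h : Term → Term, constFix h ∧ σ2.body.image (Atom.subst h) = {σ1.head}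

/-- a sequence of TGDs compatible to an atom -/
def CompatibleTo (σs : List TGD) (a : Atom) : Prop :=
  ∃ σ1, σs[0]? = some σ1 ∧ ∃ h : Term → Term, constFix h ∧
    σ1.body.image (Atom.subst h) = {a}

/-- pos(a,t): the positions (indices) at which the term t occurs in the atom a -/
def atomPos (a : Atom) (t : Term) : Set ℕ := { i | a.args[i]? = some t }

/-- T(q,a): the constants of a together with the variables of a shared in q -/
def Tq (q : CQ) (a : Atom) : Set Term :=
  { t | t ∈ a.args ∧ ((∃ c, t = Term.const c) ∨ ∃ v, t = Term.var v ∧ q.shared v) }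

/-- atom coverage: a covers b w.r.t. q and Σ -/
def Covers (Sig : Finset TGD) (q : CQ) (a b : Atom) : Prop :=
  (∀ t ∈ Tq q b, t ∈ a.args) ∧
  ∃ σs : List TGD, σs ≠ [] ∧ (∀ σ ∈ σs, σ ∈ Sig) ∧ TightSeq σs ∧ CompatibleTo σs a ∧
    ∀ t ∈ Tq q b, ∀ i ∈ atomPos b t,
      ∃ vs : List Pos, MinimalPath Sig vs σs ∧
        (∃ p0 : Pos, vs[0]? = some p0 ∧ p0.1 = a.pred ∧ p0.2 ∈ atomPos a t) ∧
        vs[vs.length - 1]? = some (b.pred, i)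

/-!
Take unary predicates p₀, …, pₘ, the inclusions pᵢ(X) → p₀(X) for 1 ≤ i ≤ m, and the Boolean
query asking for p₀(c₀), …, p₀(cₙ₋₁) with pairwise distinct constants cⱼ. The cⱼ must be
constants: with variables the query would be equivalent to ∃X p₀(X), which has a rewriting with
m + 1 CQs.

Every f : Fin n → Fin m gives the database D_f = {p_{f j + 1}(cⱼ)}, which entails the query, so
some CQ p of a rewriting maps into D_f. Sending the non-constant terms of p to a fresh constant
turns its body into a database on which p, and hence the query, still holds. In the chase of that
database each p₀(cⱼ) comes from an atom of p with the argument cⱼ; that atom maps into D_f, so it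
is p_{f j + 1}(cⱼ). Thus D_f ⊆ body(p), which determines f, and f ↦ p is injective.
-/

def unarySchema (m : ℕ) : Schema := ⟨Finset.range (m + 1), fun _ => 1⟩

def groundQuery (m n : ℕ) : CQ :=
  ⟨⟨m + 1, []⟩, (Finset.range n).image fun j => ⟨0, [Term.const j]⟩⟩

def inclusionTGD (i : ℕ) : TGD := ⟨{⟨i + 1, [Term.var 0]⟩}, ⟨0, [Term.var 0]⟩⟩

def inclusionTGDs (m : ℕ) : Finset TGD := (Finset.range m).image inclusionTGD

def choiceDatabase {m n : ℕ} (f : Fin n → Fin m) : Finset Atom :=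
  Finset.univ.image fun j : Fin n => ⟨f j + 1, [Term.const j]⟩

/-- Contains the chase of `E` under `inclusionTGDs m`, for every `m`. -/
def chase (E : Finset Atom) : Set Atom := ↑E ∪ (fun a : Atom => (⟨0, a.args⟩ : Atom)) '' ↑E

def freeze (c : ℕ) : Term → Term
  | .const d => .const d
  | _ => .const c

theorem constFix_freeze (c : ℕ) : constFix (freeze c) := fun _ => rfl

theorem exists_freeze_eq_const (c : ℕ) (t : Term) : ∃ d, freeze c t = .const d := by
  cases t <;> exact ⟨_, rfl⟩

theorem eq_of_map_freeze_eq_singleton {c d : ℕ} {l : List Term}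
    (hl : l.map (freeze c) = [.const d]) (hd : d ≠ c) : l = [.const d] := by
  obtain ⟨t, rfl, ht⟩ := List.map_eq_singleton_iff.1 hl
  cases t <;> simp_all [freeze]

theorem Atom.subst_eq_self {h : Term → Term} (hh : constFix h) {a : Atom}
    (ha : isConstTuple a.args) : a.subst h = a := by
  obtain ⟨k, l⟩ := a
  simp only [Atom.subst, Atom.mk.injEq, true_and]
  calc l.map h = l.map id :=
        List.map_congr_left fun t ht => by obtain ⟨c, rfl⟩ := ha t ht; exact hh c
    _ = l := List.map_id l

theorem IsHom.mem_of_mem {h : Term → Term} {A A' : Set Atom} (hh : IsHom h A A') {a : Atom}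
    (ha : a ∈ A) (hc : isConstTuple a.args) : a ∈ A' :=
  Atom.subst_eq_self hh.1 hc ▸ hh.2 a ha

theorem CQ.nil_mem_eval_iff {q : CQ} {I : Set Atom} :
    [] ∈ q.eval I ↔ q.head.args = [] ∧ ∃ h, IsHom h ↑q.body I := by
  simp only [CQ.eval, Set.mem_ofPred_eq, isConstTuple, List.not_mem_nil, IsEmpty.forall_iff,
    implies_true, true_and, List.map_eq_nil_iff]
  exact ⟨fun ⟨h, hh, hq⟩ => ⟨hq, h, hh⟩, fun ⟨hq, h, hh⟩ => ⟨h, hh, hq⟩⟩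

theorem nil_mem_ucqEval {Q : Set CQ} {I : Set Atom} :
    [] ∈ ucqEval Q I ↔ ∃ p ∈ Q, [] ∈ p.eval I := by
  simp [ucqEval]

theorem CQ.nil_mem_eval_image_subst {p : CQ} {g : Term → Term} (hp : p.head.args = [])
    (hg : constFix g) : [] ∈ p.eval ↑(p.body.image (Atom.subst g)) :=
  CQ.nil_mem_eval_iff.2 ⟨hp, g, hg, fun _ ha => Finset.mem_image_of_mem _ ha⟩

theorem IsDatabase.image_subst {R : Schema} {D body : Finset Atom} {h g : Term → Term}
    (hD : IsDatabase R D) (hh : IsHom h ↑body ↑D) (hg : ∀ t, ∃ c, g t = .const c) :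
    IsDatabase R (body.image (Atom.subst g)) := by
  intro a ha
  obtain ⟨b, hb, rfl⟩ := Finset.mem_image.1 ha
  obtain ⟨⟨hpred, hlen⟩, -⟩ := hD _ (hh.2 b hb)
  refine ⟨⟨hpred, by simpa [Atom.subst] using hlen⟩, ?_⟩
  simp only [Atom.subst, List.mem_map]
  rintro _ ⟨t, -, rfl⟩
  exact hg t

theorem nil_mem_eval_groundQuery_iff {m n : ℕ} {I : Set Atom} :
    [] ∈ (groundQuery m n).eval I ↔ ∀ j < n, (⟨0, [.const j]⟩ : Atom) ∈ I := by
  simp only [CQ.nil_mem_eval_iff, groundQuery, true_and, IsHom, Finset.coe_image,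
    Set.forall_mem_image, Finset.mem_coe, Finset.mem_range]
  constructor
  · rintro ⟨h, hh, hI⟩ j hj
    simpa [Atom.subst, hh j] using hI hj
  · exact fun hI => ⟨id, fun _ => rfl, fun j hj => by simpa [Atom.subst] using hI j hj⟩

theorem TGD.sat.mem_of_inclusionTGD {i : ℕ} {I : Set Atom} (hσ : (inclusionTGD i).sat I)
    {t : Term} (ht : (⟨i + 1, [t]⟩ : Atom) ∈ I) : (⟨0, [t]⟩ : Atom) ∈ I := by
  have hhom : IsHom (Function.update id (.var 0) t) ↑(inclusionTGD i).body I :=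
    ⟨fun c => by simp, by simpa [inclusionTGD, Atom.subst] using ht⟩
  obtain ⟨h', -, hfr, hhead⟩ := hσ _ hhom
  have h0 : h' (.var 0) = t := by
    simpa using hfr 0 (by simp [inclusionTGD, TGD.frontier, varsOfSet, Atom.vars])
  simpa [inclusionTGD, Atom.subst, h0] using hhead

theorem mem_args_of_mem_chase {E : Finset Atom} {l : List Term}
    (hl : (⟨0, l⟩ : Atom) ∈ chase E) : ∃ a ∈ E, a.args = l := by
  rcases hl with hl | ⟨a, ha, hal⟩
  · exact ⟨_, hl, rfl⟩
  · exact ⟨a, ha, (Atom.mk.inj hal).2⟩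

theorem satSet_chase (m : ℕ) (E : Finset Atom) : satSet (inclusionTGDs m) (chase E) := by
  simp only [satSet, inclusionTGDs, Finset.mem_image, forall_exists_index, and_imp]
  rintro _ i - rfl h ⟨hh, hbody⟩
  refine ⟨h, hh, fun _ _ => rfl, ?_⟩
  have hmem : (⟨i + 1, [h (.var 0)]⟩ : Atom) ∈ chase E := by
    simpa [inclusionTGD, Atom.subst] using hbody
  rcases hmem with hE | ⟨a, -, ha⟩
  · exact Or.inr ⟨_, hE, rfl⟩
  · exact absurd (Atom.mk.inj ha).1 (Nat.succ_ne_zero i).symm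

theorem mem_choiceDatabase_iff {m n : ℕ} {f : Fin n → Fin m} {k : ℕ} {j : Fin n} :
    (⟨k, [.const j]⟩ : Atom) ∈ choiceDatabase f ↔ k = f j + 1 := by
  simp only [choiceDatabase, Finset.mem_image, Finset.mem_univ, true_and, Atom.mk.injEq,
    List.cons.injEq, Term.const.injEq, and_true]
  exact ⟨fun ⟨j', hk, hj⟩ => by rw [← hk, Fin.ext hj], fun hk => ⟨j, hk.symm, rfl⟩⟩

theorem isDatabase_choiceDatabase {m n : ℕ} (f : Fin n → Fin m) :
    IsDatabase (unarySchema m) (choiceDatabase f) := by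
  simp only [IsDatabase, choiceDatabase, Finset.mem_image, Finset.mem_univ, true_and,
    forall_exists_index, forall_apply_eq_imp_iff]
  intro j
  exact ⟨⟨by simp [unarySchema], rfl⟩, by simp⟩

theorem eq_of_choiceDatabase_subset {m n : ℕ} {f g : Fin n → Fin m}
    (hfg : choiceDatabase g ⊆ choiceDatabase f) : g = f := by
  funext j
  have := mem_choiceDatabase_iff.1 (hfg (mem_choiceDatabase_iff (j := j).2 rfl))
  exact Fin.ext (by omega)

theorem nil_mem_certAns_choiceDatabase {m n : ℕ} (f : Fin n → Fin m) :
    [] ∈ certAns (groundQuery m n) (choiceDatabase f) (inclusionTGDs m) := by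
  intro I hDI hI
  refine nil_mem_eval_groundQuery_iff.2 fun j hj => ?_
  have hσ : inclusionTGD (f ⟨j, hj⟩) ∈ inclusionTGDs m :=
    Finset.mem_image_of_mem _ (Finset.mem_range.2 (f ⟨j, hj⟩).isLt)
  exact (hI _ hσ).mem_of_inclusionTGD (hDI (mem_choiceDatabase_iff (j := ⟨j, hj⟩).2 rfl))

theorem mem_chase_of_nil_mem_certAns {m n : ℕ} {E : Finset Atom}
    (hE : [] ∈ certAns (groundQuery m n) E (inclusionTGDs m)) :
    ∀ j < n, (⟨0, [.const j]⟩ : Atom) ∈ chase E :=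
  nil_mem_eval_groundQuery_iff.1 (hE _ Set.subset_union_left (satSet_chase m E))

theorem exists_mem_rewriting_choiceDatabase_subset {m n : ℕ} {Q : Finset CQ}
    (hQ : ∀ D : Finset Atom, IsDatabase (unarySchema m) D →
      ucqEval ↑Q ↑D = certAns (groundQuery m n) D (inclusionTGDs m))
    (f : Fin n → Fin m) :
    ∃ p ∈ Q, choiceDatabase f ⊆ p.body ∧ ∃ h, IsHom h ↑p.body ↑(choiceDatabase f) := by
  have hDf := isDatabase_choiceDatabase f
  obtain ⟨p, hpQ, hp⟩ := nil_mem_ucqEval.1 ((hQ _ hDf).symm ▸ nil_mem_certAns_choiceDatabase f)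
  obtain ⟨hhead, h, hh⟩ := CQ.nil_mem_eval_iff.1 hp
  refine ⟨p, hpQ, ?_, h, hh⟩
  -- `n` is none of the constants `0, …, n - 1` of the query, so in the chase of `E` only the
  -- ground atoms of `p` can produce the atoms `p₀(cⱼ)`.
  set E := p.body.image (Atom.subst (freeze n))
  have hE : IsDatabase (unarySchema m) E := hDf.image_subst hh (exists_freeze_eq_const n)
  have hchase := mem_chase_of_nil_mem_certAns <| (hQ E hE) ▸
    nil_mem_ucqEval.2 ⟨p, hpQ, CQ.nil_mem_eval_image_subst hhead (constFix_freeze n)⟩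
  intro a ha
  obtain ⟨j, -, rfl⟩ := Finset.mem_image.1 ha
  obtain ⟨_, hbE, hbargs⟩ := mem_args_of_mem_chase (hchase j j.isLt)
  obtain ⟨⟨k, l⟩, hb, rfl⟩ := Finset.mem_image.1 hbE
  obtain rfl : l = [.const j] := eq_of_map_freeze_eq_singleton hbargs j.isLt.ne
  have hk := hh.mem_of_mem hb (by simp [isConstTuple])
  rw [Finset.mem_coe, mem_choiceDatabase_iff] at hk
  rwa [← hk]

theorem card_body_groundQuery (m n : ℕ) : (groundQuery m n).body.card = n := by
  rw [groundQuery, Finset.card_image_of_injective _ fun _ _ h => by simpa using h,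
    Finset.card_range]

theorem overSchema_groundQuery (m n : ℕ) : (groundQuery m n).overSchema (unarySchema m) := by
  simp [CQ.overSchema, groundQuery, Atom.overSchema, unarySchema, Term.noNull]

theorem overSchema_inclusionTGDs (m : ℕ) :
    ∀ σ ∈ inclusionTGDs m, σ.overSchema (unarySchema m) := by
  simp only [inclusionTGDs, Finset.mem_image, Finset.mem_range, forall_exists_index, and_imp]
  rintro _ i hi rfl
  simp [TGD.overSchema, inclusionTGD, Atom.overSchema, unarySchema, Term.noNull, hi]

theorem linearSet_inclusionTGDs (m : ℕ) : LinearSet (inclusionTGDs m) := by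
  simp [LinearSet, inclusionTGDs, TGD.Linear, inclusionTGD]

theorem linear_rewriting_lower_bound_general (m n : ℕ) :
    ∃ (R : Schema) (q : CQ) (Sig : Finset TGD),
      q.body.card = n ∧ q.overSchema R ∧
      (∀ σ ∈ Sig, σ.overSchema R) ∧ LinearSet Sig ∧
      ∀ Q : Finset CQ,
        (∀ D : Finset Atom, IsDatabase R D → ucqEval ↑Q ↑D = certAns q D Sig) →
        m ^ n ≤ Q.card := by
  refine ⟨unarySchema m, groundQuery m n, inclusionTGDs m, card_body_groundQuery m n,
    overSchema_groundQuery m n, overSchema_inclusionTGDs m, linearSet_inclusionTGDs m,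
    fun Q hQ => ?_⟩
  choose p hpQ hsub h hh using exists_mem_rewriting_choiceDatabase_subset hQ
  have hinj : Function.Injective p := fun f g hfg =>
    (eq_of_choiceDatabase_subset fun a ha =>
      (hh f).mem_of_mem (hfg ▸ hsub g ha) (isDatabase_choiceDatabase g a ha).2).symm
  calc m ^ n = (Finset.univ : Finset (Fin n → Fin m)).card := by simp
    _ ≤ Q.card := Finset.card_le_card_of_injOn p (fun f _ => hpQ f) hinj.injOn

/-- for all m,n ≥ 1 there are a schema, a CQ with n body atoms and
a linear set of TGDs such that every UCQ-rewriting contains at least m^n CQs. -/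
theorem linear_rewriting_lower_bound (m n : ℕ) (hm : 1 ≤ m) (hn : 1 ≤ n) :
    ∃ (R : Schema) (q : CQ) (Sig : Finset TGD),
      q.body.card = n ∧ q.overSchema R ∧
      (∀ σ ∈ Sig, σ.overSchema R) ∧ LinearSet Sig ∧
      ∀ Q : Finset CQ,
        (∀ D : Finset Atom, IsDatabase R D → ucqEval ↑Q ↑D = certAns q D Sig) →
        m ^ n ≤ Q.card :=
  linear_rewriting_lower_bound_general m n

end OntDB
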